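/- Fix a finite set 𝔹 of vectors of ℕ^Σ whose images under the embedding ℕ^Σ → ℚ^Σ form a basis of the ℚ-vector space ℚ^Σ; for a Parikh vector v and b ∈ 𝔹, let ⟨v⟩_b ∈ ℚ denote the b-coordinate of v in this basis. Call a linear expression expr(u) · (⋃_{a∈A} expr(a))* homogeneous if for every b ∈ 𝔹 and all x, y ∈ A, ⟨x⟩_b > 0 implies ⟨y⟩_b ≥ 0. Then every commutative regular expression is provably equal (with respect to ≡) to a finite union of homogeneous linear expressions. -/

import Mathlib

namespace CKAnote

/-- Commutative regular expressions over an alphabet `α`. -/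
inductive CRE (α : Type) where
  | zero : CRE α
  | one : CRE α
  | letter : α → CRE α
  | mul : CRE α → CRE α → CRE α
  | union : CRE α → CRE α → CRE α
  | star : CRE α → CRE α

variable {α : Type} [Fintype α] [DecidableEq α]

/-- Semantics of a commutative regular expression as a set of Parikh vectors. -/
def sem : CRE α → Set (α → ℕ)
  | .zero => ∅
  | .one => {0}
  | .letter a => {Pi.single a 1}
  | .mul e f => {w | ∃ u ∈ sem e, ∃ v ∈ sem f, w = u + v}
  | .union e f => sem e ∪ sem f
  | .star e => ↑(AddSubmonoid.closure (sem e))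

/-- Provable equality: the smallest congruence containing the axioms of
commutative Kleene algebra (where `e ≤ f` abbreviates `e ∪ f ≡ f`). -/
inductive CKA : CRE α → CRE α → Prop
  | refl (e : CRE α) : CKA e e
  | symm {e f : CRE α} : CKA e f → CKA f e
  | trans {e f g : CRE α} : CKA e f → CKA f g → CKA e g
  | mul_congr {e e' f f' : CRE α} : CKA e e' → CKA f f' → CKA (e.mul f) (e'.mul f')
  | union_congr {e e' f f' : CRE α} : CKA e e' → CKA f f' → CKA (e.union f) (e'.union f')
  | star_congr {e e' : CRE α} : CKA e e' → CKA e.star e'.star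
  | mul_assoc (e f g : CRE α) : CKA (e.mul (f.mul g)) ((e.mul f).mul g)
  | mul_comm (e f : CRE α) : CKA (e.mul f) (f.mul e)
  | one_mul (e : CRE α) : CKA (CRE.one.mul e) e
  | union_assoc (e f g : CRE α) : CKA (e.union (f.union g)) ((e.union f).union g)
  | union_comm (e f : CRE α) : CKA (e.union f) (f.union e)
  | union_idem (e : CRE α) : CKA (e.union e) e
  | zero_union (e : CRE α) : CKA (CRE.zero.union e) e
  | zero_mul (e : CRE α) : CKA (CRE.zero.mul e) CRE.zero
  | left_distrib (e f g : CRE α) : CKA (e.mul (f.union g)) ((e.mul f).union (e.mul g))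
  | star_unfold (e : CRE α) : CKA ((CRE.one.union (e.mul e.star)).union e.star) e.star
  | star_lfp {e f : CRE α} : CKA ((e.mul f).union f) f → CKA ((e.star.mul f).union f) f

/-- `e ≤ f`, i.e. `e ∪ f ≡ f`. -/
def leq (e f : CRE α) : Prop := CKA (e.union f) f

/-- `e^n`, the `n`-fold product of `e` with itself. -/
def pow (e : CRE α) : ℕ → CRE α
  | 0 => CRE.one
  | n + 1 => e.mul (pow e n)

/-- `e^{<n}`, i.e. `(e ∪ 1)^(n-1)` for `n > 0` and `0` for `n = 0`. -/
def ltPow (e : CRE α) : ℕ → CRE α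
  | 0 => CRE.zero
  | n + 1 => pow (e.union CRE.one) n

/-- Finite union of a list of expressions. -/
def unionList : List (CRE α) → CRE α
  | [] => CRE.zero
  | e :: l => e.union (unionList l)

/-- Finite product of a list of expressions. -/
def prodList : List (CRE α) → CRE α
  | [] => CRE.one
  | e :: l => e.mul (prodList l)

/-- `expr(u)`: the product over `a ∈ α` of `u a` copies of the letter `a`. -/
noncomputable def exprVec (u : α → ℕ) : CRE α :=
  prodList ((Finset.univ : Finset α).toList.map (fun a => pow (CRE.letter a) (u a)))

/-- The union `⋃_{b ∈ B} expr(b)` for a finite set of Parikh vectors `B`. -/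
noncomputable def unionVecs (B : Finset (α → ℕ)) : CRE α :=
  unionList (B.toList.map exprVec)

/-- The linear expression `expr(u) · (⋃_{b ∈ B} expr(b))*`. -/
noncomputable def linExpr (u : α → ℕ) (B : Finset (α → ℕ)) : CRE α :=
  (exprVec u).mul (unionVecs B).star

/-- A finite set of Parikh vectors is independent when every Parikh vector
admits at most one representation as an `ℕ`-linear combination of its elements. -/
def Independent (B : Finset (α → ℕ)) : Prop :=
  ∀ c d : (α → ℕ) → ℕ, (∑ b ∈ B, c b • b) = (∑ b ∈ B, d b • b) → ∀ b ∈ B, c b = d b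

/-- The semilinear expression associated to a list of linear data:
the finite union of the corresponding linear expressions. -/
noncomputable def semiLin (L : List ((α → ℕ) × Finset (α → ℕ))) : CRE α :=
  unionList (L.map (fun p => linExpr p.1 p.2))

/-- The dimension of a semilinear expression: the maximum of the dimensions
of its linear components. -/
def dimSL (L : List ((α → ℕ) × Finset (α → ℕ))) : ℕ :=
  (L.map (fun p => p.2.card)).foldr max 0

/-- Finitary (star-free) expressions. -/
def NoStar : CRE α → Prop
  | .zero => True
  | .one => True
  | .letter _ => True
  | .mul e f => NoStar e ∧ NoStar f
  | .union e f => NoStar e ∧ NoStar f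
  | .star _ => False

/-- Coordinatewise embedding of `ℕ^α` into `ℚ^α`. -/
def toQ (v : α → ℕ) : α → ℚ := fun a => (v a : ℚ)

end CKAnote

/-!
Every expression is provably a finite union of linear expressions `expr(u) · C*`, since such
unions are closed under `∪`, `·` and `*`. If a period set `C` is not homogeneous for a coordinate
functional `φ`, it contains `x, y` with `φ x > 0 > φ y`; choose `p, q > 0` with
`φ (q x + p y) = 0`. The identity `x* y* ≡ (x^q y^p)* (x^{<q} y* ∪ y^{<p} x*)` rewrites
`expr(u) · C*` as a finite union of linear expressions whose period sets arise from `C` by replacing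
`x`, resp. `y`, by `q x + p y`. This lowers the number of periods on which `φ` does not vanish, and
the new periods lie in the monoid generated by `C`, so homogeneity for the functionals already
treated survives. Treating the coordinate functionals of the basis one after the other proves
the theorem.
-/

theorem exists_nat_mul_eq_nat_mul {s t : ℚ} (hs : 0 < s) (ht : 0 < t) :
    ∃ p q : ℕ, 0 < q ∧ (q : ℚ) * s = p * t := by
  have hr : 0 < s / t := div_pos hs ht
  refine ⟨(s / t).num.natAbs, (s / t).den, (s / t).den_pos, ?_⟩
  rw [Nat.cast_natAbs, abs_of_pos (Rat.num_pos.2 hr), ← Rat.mul_den_eq_num]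
  field_simp

theorem Finset.card_filter_insert_erase_lt {β : Type*} [DecidableEq β] {p : β → Prop}
    [DecidablePred p] {s : Finset β} {x z : β} (hx : x ∈ s) (hpx : p x) (hpz : ¬p z) :
    ((insert z (s.erase x)).filter p).card < (s.filter p).card := by
  rw [Finset.filter_insert, if_neg hpz, Finset.filter_erase]
  exact Finset.card_erase_lt_of_mem (Finset.mem_filter.2 ⟨hx, hpx⟩)

namespace CKAnote

variable {α : Type}

local infix:50 " ≡ₖ " => CKA
local infix:50 " ≤ₖ " => leq

namespace CKA

theorem le_of_eq {e f : CRE α} (h : e ≡ₖ f) : e ≤ₖ f :=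
  (union_congr h (refl f)).trans (union_idem f)

theorem le_refl (e : CRE α) : e ≤ₖ e := le_of_eq (refl e)

theorem le_trans {e f g : CRE α} (h₁ : e ≤ₖ f) (h₂ : f ≤ₖ g) : e ≤ₖ g :=
  (((union_congr (refl e) h₂.symm).trans (union_assoc e f g)).trans
    (union_congr h₁ (refl g))).trans h₂

theorem le_antisymm {e f : CRE α} (h₁ : e ≤ₖ f) (h₂ : f ≤ₖ e) : e ≡ₖ f :=
  (h₂.symm.trans (union_comm f e)).trans h₁

instance : @Trans (CRE α) (CRE α) (CRE α) CKA CKA CKA := ⟨trans⟩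
instance : @Trans (CRE α) (CRE α) (CRE α) leq leq leq := ⟨le_trans⟩
instance : @Trans (CRE α) (CRE α) (CRE α) CKA leq leq := ⟨fun h₁ h₂ => le_trans (le_of_eq h₁) h₂⟩
instance : @Trans (CRE α) (CRE α) (CRE α) leq CKA leq := ⟨fun h₁ h₂ => le_trans h₁ (le_of_eq h₂)⟩

theorem le_congr {e e' f f' : CRE α} (he : e ≡ₖ e') (hf : f ≡ₖ f') (h : e ≤ₖ f) : e' ≤ₖ f' :=
  le_trans (le_of_eq he.symm) (le_trans h (le_of_eq hf))

theorem le_union_left (e f : CRE α) : e ≤ₖ e.union f :=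
  calc e.union (e.union f) ≡ₖ (e.union e).union f := union_assoc e e f
    _ ≡ₖ e.union f := union_congr (union_idem e) (refl f)

theorem le_union_right (e f : CRE α) : f ≤ₖ e.union f :=
  le_trans (le_union_left f e) (le_of_eq (union_comm f e))

theorem union_le {e f g : CRE α} (h₁ : e ≤ₖ g) (h₂ : f ≤ₖ g) : e.union f ≤ₖ g :=
  calc (e.union f).union g ≡ₖ e.union (f.union g) := (union_assoc e f g).symm
    _ ≡ₖ e.union g := union_congr (refl e) h₂
    _ ≡ₖ g := h₁

theorem union_zero (e : CRE α) : e.union CRE.zero ≡ₖ e :=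
  (union_comm e CRE.zero).trans (zero_union e)

theorem mul_one (e : CRE α) : e.mul CRE.one ≡ₖ e :=
  (mul_comm e CRE.one).trans (one_mul e)

theorem mul_zero (e : CRE α) : e.mul CRE.zero ≡ₖ CRE.zero :=
  (mul_comm e CRE.zero).trans (zero_mul e)

theorem right_distrib (e f g : CRE α) : (e.union f).mul g ≡ₖ (e.mul g).union (f.mul g) :=
  ((mul_comm (e.union f) g).trans (left_distrib g e f)).trans
    (union_congr (mul_comm g e) (mul_comm g f))

theorem mul_left_comm (a b c : CRE α) : a.mul (b.mul c) ≡ₖ b.mul (a.mul c) :=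
  calc a.mul (b.mul c) ≡ₖ (a.mul b).mul c := mul_assoc a b c
    _ ≡ₖ (b.mul a).mul c := mul_congr (mul_comm a b) (refl c)
    _ ≡ₖ b.mul (a.mul c) := (mul_assoc b a c).symm

theorem mul_mul_mul_comm (a b c d : CRE α) :
    (a.mul b).mul (c.mul d) ≡ₖ (a.mul c).mul (b.mul d) :=
  calc (a.mul b).mul (c.mul d) ≡ₖ a.mul (b.mul (c.mul d)) := (mul_assoc a b _).symm
    _ ≡ₖ a.mul (c.mul (b.mul d)) := mul_congr (refl a) (mul_left_comm b c d)
    _ ≡ₖ (a.mul c).mul (b.mul d) := mul_assoc a c _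

theorem mul_le_mul_left {f f' : CRE α} (e : CRE α) (h : f ≤ₖ f') : e.mul f ≤ₖ e.mul f' :=
  calc (e.mul f).union (e.mul f') ≡ₖ e.mul (f.union f') := (left_distrib e f f').symm
    _ ≡ₖ e.mul f' := mul_congr (refl e) h

theorem mul_le_mul_right {f f' : CRE α} (e : CRE α) (h : f ≤ₖ f') : f.mul e ≤ₖ f'.mul e :=
  calc f.mul e ≡ₖ e.mul f := mul_comm f e
    _ ≤ₖ e.mul f' := mul_le_mul_left e h
    _ ≡ₖ f'.mul e := mul_comm e f'

theorem mul_le_mul {e e' f f' : CRE α} (h₁ : e ≤ₖ e') (h₂ : f ≤ₖ f') : e.mul f ≤ₖ e'.mul f' :=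
  le_trans (mul_le_mul_left e h₂) (mul_le_mul_right f' h₁)

theorem one_le_star (e : CRE α) : CRE.one ≤ₖ e.star :=
  le_trans (le_union_left _ (e.mul e.star))
    (le_trans (le_union_left _ e.star) (le_of_eq (star_unfold e)))

theorem mul_star_le_star (e : CRE α) : e.mul e.star ≤ₖ e.star :=
  le_trans (le_union_right CRE.one _)
    (le_trans (le_union_left _ e.star) (le_of_eq (star_unfold e)))

theorem le_star (e : CRE α) : e ≤ₖ e.star :=
  calc e ≡ₖ e.mul CRE.one := (mul_one e).symm
    _ ≤ₖ e.mul e.star := mul_le_mul_left e (one_le_star e)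
    _ ≤ₖ e.star := mul_star_le_star e

theorem star_le {e g : CRE α} (h₁ : CRE.one ≤ₖ g) (h₂ : e.mul g ≤ₖ g) : e.star ≤ₖ g :=
  calc e.star ≡ₖ e.star.mul CRE.one := (mul_one e.star).symm
    _ ≤ₖ e.star.mul g := mul_le_mul_left e.star h₁
    _ ≤ₖ g := star_lfp h₂

theorem star_mul_star (e : CRE α) : e.star.mul e.star ≡ₖ e.star :=
  le_antisymm (star_lfp (mul_star_le_star e))
    (calc e.star ≡ₖ CRE.one.mul e.star := (one_mul e.star).symm
      _ ≤ₖ e.star.mul e.star := mul_le_mul_right e.star (one_le_star e))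

theorem mul_le_star {a b g : CRE α} (ha : a ≤ₖ g.star) (hb : b ≤ₖ g.star) : a.mul b ≤ₖ g.star :=
  le_trans (mul_le_mul ha hb) (le_of_eq (star_mul_star g))

theorem star_le_star {e f : CRE α} (h : e ≤ₖ f.star) : e.star ≤ₖ f.star :=
  star_le (one_le_star f) (mul_le_star h (le_refl _))

theorem star_mono {e f : CRE α} (h : e ≤ₖ f) : e.star ≤ₖ f.star :=
  star_le_star (le_trans h (le_star f))

theorem star_unfold_eq (e : CRE α) : e.star ≡ₖ CRE.one.union (e.mul e.star) :=
  le_antisymm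
    (star_le (le_union_left _ _)
      (calc e.mul (CRE.one.union (e.mul e.star))
          ≤ₖ e.mul e.star := mul_le_mul_left e (union_le (one_le_star e) (mul_star_le_star e))
        _ ≤ₖ CRE.one.union (e.mul e.star) := le_union_right _ _))
    (le_trans (le_union_left _ e.star) (le_of_eq (star_unfold e)))

theorem star_zero : (CRE.zero.star : CRE α) ≡ₖ CRE.one :=
  le_antisymm
    (star_le (le_refl CRE.one) (le_trans (le_of_eq (zero_mul CRE.one)) (zero_union CRE.one)))
    (one_le_star CRE.zero)

theorem star_union (e f : CRE α) : (e.union f).star ≡ₖ e.star.mul f.star := by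
  have he : e ≤ₖ (e.union f).star := le_trans (le_union_left e f) (le_star _)
  have hf : f ≤ₖ (e.union f).star := le_trans (le_union_right e f) (le_star _)
  refine le_antisymm (star_le ?_ ?_) (mul_le_star (star_le_star he) (star_le_star hf))
  · calc CRE.one ≡ₖ CRE.one.mul CRE.one := (one_mul CRE.one).symm
      _ ≤ₖ e.star.mul f.star := mul_le_mul (one_le_star e) (one_le_star f)
  · refine le_congr (right_distrib e f _).symm (refl _) (union_le ?_ ?_)
    · calc e.mul (e.star.mul f.star) ≡ₖ (e.mul e.star).mul f.star := mul_assoc e e.star f.star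
        _ ≤ₖ e.star.mul f.star := mul_le_mul_right f.star (mul_star_le_star e)
    · calc f.mul (e.star.mul f.star) ≡ₖ e.star.mul (f.mul f.star) := mul_left_comm f _ _
        _ ≤ₖ e.star.mul f.star := mul_le_mul_left e.star (mul_star_le_star f)

theorem star_union_eq_star_mul_star_mul_star (e f : CRE α) :
    (e.union f).star ≡ₖ f.star.mul (e.mul f.star).star := by
  have hf : f.star ≤ₖ (e.union f).star := star_mono (le_union_right e f)
  have hef : e.mul f.star ≤ₖ (e.union f).star :=
    mul_le_star (le_trans (le_union_left e f) (le_star _)) hf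
  refine le_antisymm (star_le ?_ ?_) (mul_le_star hf (star_le_star hef))
  · calc CRE.one ≡ₖ CRE.one.mul CRE.one := (one_mul _).symm
      _ ≤ₖ f.star.mul (e.mul f.star).star := mul_le_mul (one_le_star f) (one_le_star _)
  · refine le_congr (right_distrib e f _).symm (refl _) (union_le ?_ ?_)
    · calc e.mul (f.star.mul (e.mul f.star).star)
          ≡ₖ (e.mul f.star).mul (e.mul f.star).star := mul_assoc _ _ _
        _ ≤ₖ (e.mul f.star).star := mul_star_le_star _
        _ ≡ₖ CRE.one.mul (e.mul f.star).star := (one_mul _).symm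
        _ ≤ₖ f.star.mul (e.mul f.star).star := mul_le_mul_right _ (one_le_star f)
    · calc f.mul (f.star.mul (e.mul f.star).star)
          ≡ₖ (f.mul f.star).mul (e.mul f.star).star := mul_assoc _ _ _
        _ ≤ₖ f.star.mul (e.mul f.star).star := mul_le_mul_right _ (mul_star_le_star f)

theorem mul_star_star_eq_one_union_mul_star (e f : CRE α) :
    (e.mul f.star).star ≡ₖ CRE.one.union (e.mul (e.union f).star) := by
  have hf : f.star ≤ₖ (e.union f).star := star_mono (le_union_right e f)
  have he : e ≤ₖ (e.union f).star := le_trans (le_union_left e f) (le_star _)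
  refine le_antisymm (star_le (le_union_left _ _) ?_) (union_le (one_le_star _) ?_)
  · refine le_congr (left_distrib (e.mul f.star) CRE.one _).symm (refl _) (union_le ?_ ?_)
    · calc (e.mul f.star).mul CRE.one ≡ₖ e.mul f.star := mul_one _
        _ ≤ₖ e.mul (e.union f).star := mul_le_mul_left e hf
        _ ≤ₖ CRE.one.union (e.mul (e.union f).star) := le_union_right _ _
    · calc (e.mul f.star).mul (e.mul (e.union f).star)
          ≡ₖ e.mul (f.star.mul (e.mul (e.union f).star)) := (mul_assoc _ _ _).symm
        _ ≤ₖ e.mul (e.union f).star :=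
          mul_le_mul_left e (mul_le_star hf (mul_le_star he (le_refl _)))
        _ ≤ₖ CRE.one.union (e.mul (e.union f).star) := le_union_right _ _
  · calc e.mul (e.union f).star ≡ₖ e.mul (f.star.mul (e.mul f.star).star) :=
        mul_congr (refl e) (star_union_eq_star_mul_star_mul_star e f)
      _ ≡ₖ (e.mul f.star).mul (e.mul f.star).star := mul_assoc _ _ _
      _ ≤ₖ (e.mul f.star).star := mul_star_le_star _

theorem pow_add (e : CRE α) (m n : ℕ) : pow e (m + n) ≡ₖ (pow e m).mul (pow e n) := by
  induction m with
  | zero => simpa only [pow, Nat.zero_add] using (one_mul (pow e n)).symm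
  | succ m ih =>
    rw [Nat.succ_add]
    exact (mul_congr (refl e) ih).trans (mul_assoc _ _ _)

theorem pow_le_star {e u : CRE α} (h : e ≤ₖ u.star) (n : ℕ) : pow e n ≤ₖ u.star := by
  induction n with
  | zero => exact one_le_star u
  | succ n ih => exact mul_le_star h ih

theorem le_unionList {l : List (CRE α)} {e : CRE α} (h : e ∈ l) : e ≤ₖ unionList l := by
  induction l with
  | nil => cases h
  | cons x l ih =>
    rcases List.mem_cons.1 h with rfl | h
    · exact le_union_left _ _
    · exact le_trans (ih h) (le_union_right _ _)

theorem unionList_le {l : List (CRE α)} {g : CRE α} (h : ∀ e ∈ l, e ≤ₖ g) :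
    unionList l ≤ₖ g := by
  induction l with
  | nil => exact zero_union g
  | cons x l ih => exact union_le (h x List.mem_cons_self) (ih fun e he => h e (.tail x he))

theorem unionList_append (l₁ l₂ : List (CRE α)) :
    unionList (l₁ ++ l₂) ≡ₖ (unionList l₁).union (unionList l₂) := by
  induction l₁ with
  | nil => exact (zero_union _).symm
  | cons x l ih => exact (union_congr (refl x) ih).trans (union_assoc _ _ _)

theorem unionList_map_congr {β : Type*} {l : List β} {f g : β → CRE α}
    (h : ∀ x ∈ l, f x ≡ₖ g x) : unionList (l.map f) ≡ₖ unionList (l.map g) := by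
  induction l with
  | nil => exact refl _
  | cons x l ih => exact union_congr (h x List.mem_cons_self) (ih fun y hy => h y (.tail x hy))

theorem unionList_mul (l : List (CRE α)) (e : CRE α) :
    (unionList l).mul e ≡ₖ unionList (l.map fun x => x.mul e) := by
  induction l with
  | nil => exact zero_mul e
  | cons x l ih => exact (right_distrib x _ e).trans (union_congr (refl _) ih)

theorem prodList_map_congr {β : Type*} {l : List β} {f g : β → CRE α}
    (h : ∀ x ∈ l, f x ≡ₖ g x) : prodList (l.map f) ≡ₖ prodList (l.map g) := by
  induction l with
  | nil => exact refl _
  | cons x l ih => exact mul_congr (h x List.mem_cons_self) (ih fun y hy => h y (.tail x hy))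

theorem prodList_map_eq_one {β : Type*} {l : List β} {f : β → CRE α}
    (h : ∀ x ∈ l, f x ≡ₖ CRE.one) : prodList (l.map f) ≡ₖ CRE.one :=
  (prodList_map_congr h).trans (by
    induction l with
    | nil => exact refl _
    | cons x l ih => exact (mul_congr (refl _) (ih fun y hy => h y (.tail x hy))).trans (one_mul _))

theorem prodList_map_mul {β : Type*} (l : List β) (f g : β → CRE α) :
    prodList (l.map fun x => (f x).mul (g x)) ≡ₖ (prodList (l.map f)).mul (prodList (l.map g)) := by
  induction l with
  | nil => exact (one_mul CRE.one).symm
  | cons x l ih => exact (mul_congr (refl _) ih).trans (mul_mul_mul_comm _ _ _ _)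

theorem prodList_map_eq_of_nodup {β : Type*} {l : List β} {f : β → CRE α} {a : β}
    (hl : l.Nodup) (ha : a ∈ l) (h : ∀ x ∈ l, x ≠ a → f x ≡ₖ CRE.one) :
    prodList (l.map f) ≡ₖ f a := by
  induction l with
  | nil => cases ha
  | cons x l ih =>
    obtain ⟨hxl, hl⟩ := List.nodup_cons.1 hl
    rcases List.mem_cons.1 ha with rfl | ha
    · refine (mul_congr (refl _) (prodList_map_eq_one fun y hy => h y (.tail _ hy) ?_)).trans
        (mul_one _)
      rintro rfl
      exact hxl hy
    · have hxa : x ≠ a := by rintro rfl; exact hxl ha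
      exact (mul_congr (h x List.mem_cons_self hxa) (ih hl ha fun y hy => h y (.tail x hy))).trans
        (one_mul _)

end CKA

def unionPowLT (e : CRE α) (n : ℕ) : CRE α := unionList ((List.range n).map (pow e))

namespace CKA

theorem one_le_unionPowLT {e : CRE α} {n : ℕ} (h : 0 < n) : CRE.one ≤ₖ unionPowLT e n :=
  le_unionList (List.mem_map.2 ⟨0, List.mem_range.2 h, rfl⟩)

theorem unionPowLT_le_star {e u : CRE α} (h : e ≤ₖ u.star) (n : ℕ) : unionPowLT e n ≤ₖ u.star :=
  unionList_le fun _ hg => by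
    obtain ⟨i, -, rfl⟩ := List.mem_map.1 hg
    exact pow_le_star h i

theorem unionPowLT_succ (e : CRE α) (n : ℕ) :
    unionPowLT e (n + 1) ≡ₖ (unionPowLT e n).union (pow e n) := by
  unfold unionPowLT
  rw [List.range_succ, List.map_append]
  exact (unionList_append _ _).trans (union_congr (refl _) (union_zero _))

theorem mul_unionPowLT_le (e : CRE α) (n : ℕ) :
    e.mul (unionPowLT e n) ≤ₖ (unionPowLT e n).union (pow e n) := by
  refine le_congr ((mul_comm _ _).trans
    ((unionList_mul _ e).trans (unionList_map_congr fun _ _ => mul_comm _ e))).symm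
    (refl _) (unionList_le fun g hg => ?_)
  obtain ⟨_, hh, rfl⟩ := List.mem_map.1 hg
  obtain ⟨i, hi, rfl⟩ := List.mem_map.1 hh
  change pow e (i + 1) ≤ₖ _
  rcases Nat.lt_or_ge (i + 1) n with hlt | hge
  · exact le_trans (le_unionList (List.mem_map.2 ⟨i + 1, List.mem_range.2 hlt, rfl⟩))
      (le_union_left _ _)
  · rw [show i + 1 = n by have := List.mem_range.1 hi; omega]
    exact le_union_right _ _

theorem star_eq_unionPowLT_union (e : CRE α) (n : ℕ) :
    e.star ≡ₖ (unionPowLT e n).union ((pow e n).mul e.star) := by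
  induction n with
  | zero => exact ((zero_union _).trans (one_mul _)).symm
  | succ n ih =>
    have hpow : (pow e n).mul e.star ≡ₖ (pow e n).union ((pow e (n + 1)).mul e.star) :=
      calc (pow e n).mul e.star ≡ₖ (pow e n).mul (CRE.one.union (e.mul e.star)) :=
            mul_congr (refl _) (star_unfold_eq e)
        _ ≡ₖ ((pow e n).mul CRE.one).union ((pow e n).mul (e.mul e.star)) := left_distrib _ _ _
        _ ≡ₖ (pow e n).union ((pow e (n + 1)).mul e.star) :=
            union_congr (mul_one _) ((mul_left_comm _ _ _).trans (mul_assoc _ _ _))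
    calc e.star ≡ₖ (unionPowLT e n).union ((pow e n).mul e.star) := ih
      _ ≡ₖ ((unionPowLT e n).union (pow e n)).union ((pow e (n + 1)).mul e.star) :=
          (union_congr (refl _) hpow).trans (union_assoc _ _ _)
      _ ≡ₖ (unionPowLT e (n + 1)).union ((pow e (n + 1)).mul e.star) :=
          union_congr (unionPowLT_succ e n).symm (refl _)

/-- Semantically: every `(i, j) ∈ ℕ²` is `k • (q, p)` plus a pair with `i < q` or `j < p`. -/
theorem star_mul_star_split (X Y : CRE α) {q : ℕ} (hq : 0 < q) (p : ℕ) :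
    X.star.mul Y.star ≡ₖ ((pow X q).mul (pow Y p)).star.mul
      (((unionPowLT X q).mul Y.star).union ((unionPowLT Y p).mul X.star)) := by
  set Z := (pow X q).mul (pow Y p)
  set W := ((unionPowLT X q).mul Y.star).union ((unionPowLT Y p).mul X.star)
  have hWT : W ≤ₖ Z.star.mul W :=
    le_trans (le_of_eq (one_mul W).symm) (mul_le_mul_right W (one_le_star Z))
  have hYW : Y.star ≤ₖ W :=
    calc Y.star ≡ₖ CRE.one.mul Y.star := (one_mul _).symm
      _ ≤ₖ (unionPowLT X q).mul Y.star := mul_le_mul_right _ (one_le_unionPowLT hq)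
      _ ≤ₖ W := le_union_left _ _
  have hXpowY : (pow X q).mul Y.star ≤ₖ Z.star.mul W :=
    calc (pow X q).mul Y.star
        ≡ₖ (pow X q).mul ((unionPowLT Y p).union ((pow Y p).mul Y.star)) :=
          mul_congr (refl _) (star_eq_unionPowLT_union Y p)
      _ ≡ₖ ((unionPowLT Y p).mul (pow X q)).union (Z.mul Y.star) :=
          (left_distrib _ _ _).trans (union_congr (mul_comm _ _) (mul_assoc _ _ _))
      _ ≤ₖ W.union (Z.star.mul W) :=
          union_le
            (le_trans (mul_le_mul_left _ (pow_le_star (le_star X) q))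
              (le_trans (le_union_right _ _) (le_union_left _ _)))
            (le_trans (mul_le_mul (le_star Z) hYW) (le_union_right _ _))
      _ ≤ₖ Z.star.mul W := union_le hWT (le_refl _)
  have hXW : X.mul W ≤ₖ Z.star.mul W := by
    refine le_congr (left_distrib _ _ _).symm (refl _) (union_le ?_ ?_)
    · calc X.mul ((unionPowLT X q).mul Y.star)
          ≡ₖ (X.mul (unionPowLT X q)).mul Y.star := mul_assoc _ _ _
        _ ≤ₖ ((unionPowLT X q).union (pow X q)).mul Y.star :=
          mul_le_mul_right _ (mul_unionPowLT_le X q)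
        _ ≡ₖ ((unionPowLT X q).mul Y.star).union ((pow X q).mul Y.star) := right_distrib _ _ _
        _ ≤ₖ Z.star.mul W := union_le (le_trans (le_union_left _ _) hWT) hXpowY
    · calc X.mul ((unionPowLT Y p).mul X.star)
          ≡ₖ (unionPowLT Y p).mul (X.mul X.star) := mul_left_comm _ _ _
        _ ≤ₖ (unionPowLT Y p).mul X.star := mul_le_mul_left _ (mul_star_le_star X)
        _ ≤ₖ Z.star.mul W := le_trans (le_union_right _ _) hWT
  have hXT : X.mul (Z.star.mul W) ≤ₖ Z.star.mul W :=
    calc X.mul (Z.star.mul W) ≡ₖ Z.star.mul (X.mul W) := mul_left_comm _ _ _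
      _ ≤ₖ Z.star.mul (Z.star.mul W) := mul_le_mul_left _ hXW
      _ ≡ₖ Z.star.mul W := (mul_assoc _ _ _).trans (mul_congr (star_mul_star Z) (refl W))
  have hX : X ≤ₖ (X.union Y).star := le_trans (le_union_left X Y) (le_star _)
  have hY : Y ≤ₖ (X.union Y).star := le_trans (le_union_right X Y) (le_star _)
  refine le_antisymm ?_ (le_congr (refl _) (star_union X Y) ?_)
  · calc X.star.mul Y.star ≤ₖ X.star.mul (Z.star.mul W) :=
          mul_le_mul_left _ (le_trans hYW hWT)
      _ ≤ₖ Z.star.mul W := star_lfp hXT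
  · refine mul_le_star (star_le_star (mul_le_star (pow_le_star hX q) (pow_le_star hY p)))
      (union_le ?_ ?_)
    · exact mul_le_star (unionPowLT_le_star hX q) (star_le_star hY)
    · exact mul_le_star (unionPowLT_le_star hY p) (star_le_star hX)

end CKA

section Vectors

variable [Fintype α]

namespace CKA

theorem exprVec_add (u v : α → ℕ) : exprVec (u + v) ≡ₖ (exprVec u).mul (exprVec v) :=
  (prodList_map_congr fun a _ => pow_add (CRE.letter a) (u a) (v a)).trans
    (prodList_map_mul _ _ _)

theorem exprVec_zero : exprVec (0 : α → ℕ) ≡ₖ CRE.one :=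
  prodList_map_eq_one fun _ _ => refl CRE.one

theorem exprVec_nsmul (n : ℕ) (u : α → ℕ) : exprVec (n • u) ≡ₖ pow (exprVec u) n := by
  induction n with
  | zero => rw [zero_smul]; exact exprVec_zero
  | succ n ih =>
    rw [succ_nsmul']
    exact (exprVec_add _ _).trans (mul_congr (refl _) ih)

theorem exprVec_single [DecidableEq α] (a : α) : exprVec (Pi.single a 1) ≡ₖ CRE.letter a := by
  refine (prodList_map_eq_of_nodup (Finset.nodup_toList _)
    (Finset.mem_toList.2 (Finset.mem_univ a)) fun x _ hx => ?_).trans ?_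
  · rw [Pi.single_eq_of_ne hx]
    exact refl _
  · rw [Pi.single_eq_same]
    exact mul_one _

theorem pow_mul_linExpr (w u : α → ℕ) (i : ℕ) (A : Finset (α → ℕ)) :
    (pow (exprVec w) i).mul (linExpr u A) ≡ₖ linExpr (u + i • w) A :=
  calc (pow (exprVec w) i).mul (linExpr u A)
      ≡ₖ ((exprVec u).mul (pow (exprVec w) i)).mul (unionVecs A).star :=
        (mul_left_comm _ _ _).trans (mul_assoc _ _ _)
    _ ≡ₖ linExpr (u + i • w) A :=
        mul_congr ((mul_congr (refl _) (exprVec_nsmul i w).symm).trans (exprVec_add _ _).symm)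
          (refl _)

theorem unionPowLT_mul_linExpr (w u : α → ℕ) (n : ℕ) (A : Finset (α → ℕ)) :
    (unionPowLT (exprVec w) n).mul (linExpr u A) ≡ₖ
      semiLin ((List.range n).map fun i => (u + i • w, A)) := by
  unfold unionPowLT semiLin
  refine (unionList_mul _ _).trans ?_
  rw [List.map_map, List.map_map]
  exact unionList_map_congr fun i _ => pow_mul_linExpr w u i A

theorem le_unionVecs {v : α → ℕ} {B : Finset (α → ℕ)} (h : v ∈ B) : exprVec v ≤ₖ unionVecs B :=
  le_unionList (List.mem_map.2 ⟨v, Finset.mem_toList.2 h, rfl⟩)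

theorem unionVecs_le {B : Finset (α → ℕ)} {g : CRE α} (h : ∀ v ∈ B, exprVec v ≤ₖ g) :
    unionVecs B ≤ₖ g :=
  unionList_le fun _ he => by
    obtain ⟨v, hv, rfl⟩ := List.mem_map.1 he
    exact h v (Finset.mem_toList.1 hv)

theorem linExpr_empty (u : α → ℕ) : linExpr u ∅ ≡ₖ exprVec u := by
  unfold linExpr unionVecs
  rw [Finset.toList_empty]
  exact (mul_congr (refl _) star_zero).trans (mul_one _)

theorem semiLin_singleton (p : (α → ℕ) × Finset (α → ℕ)) : semiLin [p] ≡ₖ linExpr p.1 p.2 :=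
  union_zero _

theorem semiLin_append (L₁ L₂ : List ((α → ℕ) × Finset (α → ℕ))) :
    semiLin (L₁ ++ L₂) ≡ₖ (semiLin L₁).union (semiLin L₂) := by
  unfold semiLin
  rw [List.map_append]
  exact unionList_append _ _

theorem unionVecs_union (A B : Finset (α → ℕ)) :
    unionVecs (A ∪ B) ≡ₖ (unionVecs A).union (unionVecs B) := by
  refine le_antisymm (unionVecs_le fun v hv => ?_) (union_le ?_ ?_)
  · rcases Finset.mem_union.1 hv with hv | hv
    · exact le_trans (le_unionVecs hv) (le_union_left _ _)
    · exact le_trans (le_unionVecs hv) (le_union_right _ _)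
  · exact unionVecs_le fun v hv => le_unionVecs (Finset.mem_union_left B hv)
  · exact unionVecs_le fun v hv => le_unionVecs (Finset.mem_union_right A hv)

theorem unionVecs_insert (v : α → ℕ) (A : Finset (α → ℕ)) :
    unionVecs (insert v A) ≡ₖ (exprVec v).union (unionVecs A) := by
  refine le_antisymm (unionVecs_le fun w hw => ?_) (union_le ?_ ?_)
  · rcases Finset.mem_insert.1 hw with rfl | hw
    · exact le_union_left _ _
    · exact le_trans (le_unionVecs hw) (le_union_right _ _)
  · exact le_unionVecs (Finset.mem_insert_self v A)
  · exact unionVecs_le fun w hw => le_unionVecs (Finset.mem_insert_of_mem hw)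

theorem unionVecs_insert_star (v : α → ℕ) (A : Finset (α → ℕ)) :
    (unionVecs (insert v A)).star ≡ₖ (exprVec v).star.mul (unionVecs A).star :=
  (star_congr (unionVecs_insert v A)).trans (star_union _ _)

theorem linExpr_mul (u v : α → ℕ) (A B : Finset (α → ℕ)) :
    (linExpr u A).mul (linExpr v B) ≡ₖ linExpr (u + v) (A ∪ B) :=
  (mul_mul_mul_comm _ _ _ _).trans
    (mul_congr (exprVec_add u v).symm
      ((star_union _ _).symm.trans (star_congr (unionVecs_union A B).symm)))

theorem linExpr_star (u : α → ℕ) (A : Finset (α → ℕ)) :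
    (linExpr u A).star ≡ₖ CRE.one.union (linExpr u (insert u A)) :=
  (mul_star_star_eq_one_union_mul_star _ _).trans
    (union_congr (refl _) (mul_congr (refl _) (star_congr (unionVecs_insert u A).symm)))

theorem linExpr_mul_semiLin (u : α → ℕ) (A : Finset (α → ℕ))
    (L : List ((α → ℕ) × Finset (α → ℕ))) :
    (linExpr u A).mul (semiLin L) ≡ₖ semiLin (L.map fun q => (u + q.1, A ∪ q.2)) := by
  induction L with
  | nil => exact mul_zero _
  | cons q L ih => exact (left_distrib _ _ _).trans (union_congr (linExpr_mul u q.1 A q.2) ih)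

end CKA

def mulSL (L₁ L₂ : List ((α → ℕ) × Finset (α → ℕ))) : List ((α → ℕ) × Finset (α → ℕ)) :=
  L₁.flatMap fun p => L₂.map fun q => (p.1 + q.1, p.2 ∪ q.2)

def starSL : List ((α → ℕ) × Finset (α → ℕ)) → List ((α → ℕ) × Finset (α → ℕ))
  | [] => [(0, ∅)]
  | p :: L => starSL L ++ (starSL L).map fun q => (p.1 + q.1, insert p.1 p.2 ∪ q.2)

namespace CKA

theorem semiLin_mul (L₁ L₂ : List ((α → ℕ) × Finset (α → ℕ))) :
    (semiLin L₁).mul (semiLin L₂) ≡ₖ semiLin (mulSL L₁ L₂) := by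
  induction L₁ with
  | nil => exact zero_mul _
  | cons p L₁ ih =>
    exact (right_distrib _ _ _).trans
      ((union_congr (linExpr_mul_semiLin p.1 p.2 L₂) ih).trans (semiLin_append _ _).symm)

theorem semiLin_zero_empty : semiLin [((0 : α → ℕ), (∅ : Finset (α → ℕ)))] ≡ₖ CRE.one :=
  (semiLin_singleton _).trans ((linExpr_empty 0).trans exprVec_zero)

theorem semiLin_star (L : List ((α → ℕ) × Finset (α → ℕ))) :
    (semiLin L).star ≡ₖ semiLin (starSL L) := by
  induction L with
  | nil => exact star_zero.trans semiLin_zero_empty.symm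
  | cons p L ih =>
    calc ((linExpr p.1 p.2).union (semiLin L)).star
        ≡ₖ (CRE.one.union (linExpr p.1 (insert p.1 p.2))).mul (semiLin (starSL L)) :=
          (star_union _ _).trans (mul_congr (linExpr_star p.1 p.2) ih)
      _ ≡ₖ (semiLin (starSL L)).union
            (semiLin ((starSL L).map fun q => (p.1 + q.1, insert p.1 p.2 ∪ q.2))) :=
          (right_distrib _ _ _).trans (union_congr (one_mul _) (linExpr_mul_semiLin _ _ _))
      _ ≡ₖ semiLin (starSL (p :: L)) := (semiLin_append _ _).symm

theorem exists_semiLin [DecidableEq α] (e : CRE α) : ∃ L, e ≡ₖ semiLin L := by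
  induction e with
  | zero => exact ⟨[], refl _⟩
  | one => exact ⟨_, semiLin_zero_empty.symm⟩
  | letter a =>
    exact ⟨[(Pi.single a 1, ∅)],
      (exprVec_single a).symm.trans
        ((linExpr_empty _).symm.trans (semiLin_singleton (Pi.single a 1, ∅)).symm)⟩
  | mul e f ihe ihf =>
    obtain ⟨L₁, h₁⟩ := ihe
    obtain ⟨L₂, h₂⟩ := ihf
    exact ⟨mulSL L₁ L₂, (mul_congr h₁ h₂).trans (semiLin_mul L₁ L₂)⟩
  | union e f ihe ihf =>
    obtain ⟨L₁, h₁⟩ := ihe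
    obtain ⟨L₂, h₂⟩ := ihf
    exact ⟨L₁ ++ L₂, (union_congr h₁ h₂).trans (semiLin_append L₁ L₂).symm⟩
  | star e ih =>
    obtain ⟨L, h⟩ := ih
    exact ⟨starSL L, (star_congr h).trans (semiLin_star L)⟩

theorem unionVecs_star_split {x y : α → ℕ} {C : Finset (α → ℕ)} (hx : x ∈ C) (hy : y ∈ C)
    (hxy : x ≠ y) {q : ℕ} (hq : 0 < q) (p : ℕ) :
    (unionVecs C).star ≡ₖ (exprVec (q • x + p • y)).star.mul
      (((unionPowLT (exprVec x) q).mul (unionVecs (C.erase x)).star).union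
        ((unionPowLT (exprVec y) p).mul (unionVecs (C.erase y)).star)) := by
  have hC := unionVecs_insert_star x (C.erase x)
  rw [Finset.insert_erase hx] at hC
  have hCx := unionVecs_insert_star y ((C.erase x).erase y)
  rw [Finset.insert_erase (Finset.mem_erase.2 ⟨hxy.symm, hy⟩)] at hCx
  have hCy := unionVecs_insert_star x ((C.erase y).erase x)
  rw [Finset.insert_erase (Finset.mem_erase.2 ⟨hxy, hx⟩), Finset.erase_right_comm] at hCy
  have hZ : (pow (exprVec x) q).mul (pow (exprVec y) p) ≡ₖ exprVec (q • x + p • y) :=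
    (mul_congr (exprVec_nsmul q x) (exprVec_nsmul p y)).symm.trans (exprVec_add _ _).symm
  set X := exprVec x
  set Y := exprVec y
  set S := (unionVecs ((C.erase x).erase y)).star
  calc (unionVecs C).star ≡ₖ (X.star.mul Y.star).mul S :=
        hC.trans ((mul_congr (refl _) hCx).trans (mul_assoc _ _ _))
    _ ≡ₖ ((pow X q).mul (pow Y p)).star.mul
          ((((unionPowLT X q).mul Y.star).union ((unionPowLT Y p).mul X.star)).mul S) :=
        (mul_congr (star_mul_star_split X Y hq p) (refl S)).trans (mul_assoc _ _ _).symm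
    _ ≡ₖ _ := by
        refine mul_congr (star_congr hZ) ((right_distrib _ _ _).trans (union_congr ?_ ?_))
        · exact (mul_assoc _ _ _).symm.trans (mul_congr (refl _) hCx.symm)
        · exact (mul_assoc _ _ _).symm.trans (mul_congr (refl _) hCy.symm)

theorem mul_star_mul_unionPowLT (u z w : α → ℕ) (n : ℕ) (D : Finset (α → ℕ)) :
    (exprVec u).mul ((exprVec z).star.mul ((unionPowLT (exprVec w) n).mul (unionVecs D).star)) ≡ₖ
      semiLin ((List.range n).map fun i => (u + i • w, insert z D)) :=
  calc (exprVec u).mul ((exprVec z).star.mul ((unionPowLT (exprVec w) n).mul (unionVecs D).star))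
      ≡ₖ (unionPowLT (exprVec w) n).mul
          ((exprVec u).mul ((exprVec z).star.mul (unionVecs D).star)) :=
        (mul_congr (refl _) (mul_left_comm _ _ _)).trans (mul_left_comm _ _ _)
    _ ≡ₖ (unionPowLT (exprVec w) n).mul (linExpr u (insert z D)) :=
        mul_congr (refl _) (mul_congr (refl _) (unionVecs_insert_star z D).symm)
    _ ≡ₖ _ := unionPowLT_mul_linExpr w u n _

theorem linExpr_split {x y : α → ℕ} {C : Finset (α → ℕ)} (hx : x ∈ C) (hy : y ∈ C)
    (hxy : x ≠ y) {q : ℕ} (hq : 0 < q) (p : ℕ) (u : α → ℕ) :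
    linExpr u C ≡ₖ
      (semiLin ((List.range q).map fun i => (u + i • x, insert (q • x + p • y) (C.erase x)))).union
        (semiLin ((List.range p).map fun i => (u + i • y, insert (q • x + p • y) (C.erase y)))) :=
  (mul_congr (refl _) (unionVecs_star_split hx hy hxy hq p)).trans
    ((mul_congr (refl _) (left_distrib _ _ _)).trans
      ((left_distrib _ _ _).trans
        (union_congr (mul_star_mul_unionPowLT _ _ _ _ _) (mul_star_mul_unionPowLT _ _ _ _ _))))

end CKA

end Vectors

section Homogeneous

variable {M : Type*} [AddMonoid M]

def IsHomogeneous (φ : M →+ ℚ) (s : Set M) : Prop :=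
  (∀ w ∈ s, 0 ≤ φ w) ∨ ∀ w ∈ s, φ w ≤ 0

theorem IsHomogeneous.mono {φ : M →+ ℚ} {s t : Set M} (h : IsHomogeneous φ s) (hts : t ⊆ s) :
    IsHomogeneous φ t :=
  h.imp (fun h w hw => h w (hts hw)) fun h w hw => h w (hts hw)

theorem IsHomogeneous.closure {φ : M →+ ℚ} {s : Set M} (h : IsHomogeneous φ s) :
    IsHomogeneous φ (AddSubmonoid.closure s) := by
  have nonneg (ψ : M →+ ℚ) (hψ : ∀ w ∈ s, 0 ≤ ψ w) : ∀ w ∈ AddSubmonoid.closure s, 0 ≤ ψ w :=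
    fun _ hw => AddSubmonoid.closure_le (S := (Subsemiring.nonneg ℚ).toAddSubmonoid.comap ψ)
      |>.2 hψ hw
  exact h.imp (nonneg φ) fun h w hw =>
    neg_nonneg.1 (nonneg (-φ) (fun w hw => neg_nonneg.2 (h w hw)) w hw)

theorem IsHomogeneous.nonneg_of_pos {φ : M →+ ℚ} {s : Set M} (h : IsHomogeneous φ s)
    {x y : M} (hx : x ∈ s) (hy : y ∈ s) (hpos : 0 < φ x) : 0 ≤ φ y :=
  h.elim (fun h => h y hy) fun h => absurd (h x hx) hpos.not_ge

theorem exists_pos_neg_of_not_isHomogeneous {φ : M →+ ℚ} {s : Set M}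
    (h : ¬IsHomogeneous φ s) : ∃ x ∈ s, 0 < φ x ∧ ∃ y ∈ s, φ y < 0 := by
  simp only [IsHomogeneous, not_or, not_forall, not_le, exists_prop] at h
  obtain ⟨⟨y, hy, hyneg⟩, x, hx, hxpos⟩ := h
  exact ⟨x, hx, hxpos, y, hy, hyneg⟩

end Homogeneous

section SemiLin

variable [Fintype α]

def IsSemiLinWith (P : Finset (α → ℕ) → Prop) (e : CRE α) : Prop :=
  ∃ L : List ((α → ℕ) × Finset (α → ℕ)), e ≡ₖ semiLin L ∧ ∀ r ∈ L, P r.2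

namespace IsSemiLinWith

variable {P Q : Finset (α → ℕ) → Prop}

theorem of_cka {e f : CRE α} (h : e ≡ₖ f) (hf : IsSemiLinWith P f) : IsSemiLinWith P e :=
  let ⟨L, hL, hP⟩ := hf
  ⟨L, h.trans hL, hP⟩

theorem mono (h : ∀ A, P A → Q A) {e : CRE α} (he : IsSemiLinWith P e) : IsSemiLinWith Q e :=
  let ⟨L, hL, hP⟩ := he
  ⟨L, hL, fun r hr => h _ (hP r hr)⟩

theorem linExpr {A : Finset (α → ℕ)} (hA : P A) (u : α → ℕ) : IsSemiLinWith P (linExpr u A) :=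
  ⟨[(u, A)], (CKA.semiLin_singleton (u, A)).symm, by simpa using hA⟩

theorem union {e f : CRE α} (he : IsSemiLinWith P e) (hf : IsSemiLinWith P f) :
    IsSemiLinWith P (e.union f) :=
  let ⟨L₁, h₁, hP₁⟩ := he
  let ⟨L₂, h₂, hP₂⟩ := hf
  ⟨L₁ ++ L₂, (CKA.union_congr h₁ h₂).trans (CKA.semiLin_append L₁ L₂).symm,
    List.forall_mem_append.2 ⟨hP₁, hP₂⟩⟩

theorem semiLin {L : List ((α → ℕ) × Finset (α → ℕ))}
    (h : ∀ r ∈ L, IsSemiLinWith P (CKAnote.linExpr r.1 r.2)) : IsSemiLinWith P (semiLin L) := by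
  induction L with
  | nil => exact ⟨[], CKA.refl _, by simp⟩
  | cons r L ih => exact (h r List.mem_cons_self).union (ih fun r' hr' => h r' (.tail r hr'))

theorem bind {e : CRE α} (he : IsSemiLinWith Q e)
    (h : ∀ u A, Q A → IsSemiLinWith P (CKAnote.linExpr u A)) : IsSemiLinWith P e :=
  let ⟨_, hL, hQ⟩ := he
  of_cka hL (semiLin fun r hr => h r.1 r.2 (hQ r hr))

end IsSemiLinWith

theorem isSemiLinWith_linExpr_homogeneous (φ : (α → ℕ) →+ ℚ) (u : α → ℕ)
    (C : Finset (α → ℕ)) :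
    IsSemiLinWith (fun A => AddSubmonoid.closure (A : Set (α → ℕ)) ≤
      AddSubmonoid.closure (C : Set (α → ℕ)) ∧ IsHomogeneous φ ↑A) (linExpr u C) := by
  by_cases hC : IsHomogeneous φ ↑C
  · exact .linExpr ⟨le_rfl, hC⟩ u
  obtain ⟨x, hx, hxpos, y, hy, hyneg⟩ := exists_pos_neg_of_not_isHomogeneous hC
  obtain ⟨p, q, hq, hpq⟩ := exists_nat_mul_eq_nat_mul hxpos (neg_pos.2 hyneg)
  have hz : φ (q • x + p • y) = 0 := by
    rw [map_add, map_nsmul, map_nsmul, nsmul_eq_mul, nsmul_eq_mul, hpq]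
    ring
  have hzC : q • x + p • y ∈ AddSubmonoid.closure (C : Set (α → ℕ)) :=
    add_mem (nsmul_mem (AddSubmonoid.subset_closure hx) q)
      (nsmul_mem (AddSubmonoid.subset_closure hy) p)
  have replace : ∀ v ∈ C, φ v ≠ 0 → ∀ u', IsSemiLinWith (fun A =>
      AddSubmonoid.closure (A : Set (α → ℕ)) ≤ AddSubmonoid.closure (C : Set (α → ℕ)) ∧
        IsHomogeneous φ ↑A) (linExpr u' (insert (q • x + p • y) (C.erase v))) := fun v hv hv0 u' =>
    (isSemiLinWith_linExpr_homogeneous φ u' (insert (q • x + p • y) (C.erase v))).mono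
      fun A hA => ⟨hA.1.trans (AddSubmonoid.closure_le.2 (by
        rw [Finset.coe_insert, Set.insert_subset_iff]
        exact ⟨hzC, fun w hw =>
          AddSubmonoid.subset_closure (Finset.mem_of_mem_erase hw)⟩)), hA.2⟩
  have hxy : x ≠ y := by rintro rfl; exact hyneg.not_gt hxpos
  exact .of_cka (CKA.linExpr_split hx hy hxy hq p u)
    ((IsSemiLinWith.semiLin (List.forall_mem_map.2 fun i _ => replace x hx hxpos.ne' _)).union
      (IsSemiLinWith.semiLin (List.forall_mem_map.2 fun i _ => replace y hy hyneg.ne _)))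
termination_by (C.filter (φ · ≠ 0)).card
decreasing_by exact Finset.card_filter_insert_erase_lt hv hv0 (not_not.2 hz)

theorem isSemiLinWith_linExpr_forall_homogeneous (Φ : List ((α → ℕ) →+ ℚ)) (u : α → ℕ)
    (C : Finset (α → ℕ)) :
    IsSemiLinWith (fun A => AddSubmonoid.closure (A : Set (α → ℕ)) ≤
      AddSubmonoid.closure (C : Set (α → ℕ)) ∧ ∀ φ ∈ Φ, IsHomogeneous φ ↑A) (linExpr u C) := by
  induction Φ generalizing u C with
  | nil => exact .linExpr ⟨le_rfl, by simp⟩ u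
  | cons φ Φ ih =>
    exact (isSemiLinWith_linExpr_homogeneous φ u C).bind fun u' A ⟨hAC, hA⟩ =>
      (ih u' A).mono fun B ⟨hBA, hB⟩ => ⟨hBA.trans hAC, List.forall_mem_cons.2
        ⟨hA.closure.mono fun w hw => hBA (AddSubmonoid.subset_closure hw), hB⟩⟩

end SemiLin

variable [Fintype α] [DecidableEq α]

theorem homogeneous_decomposition_general (𝔹 : Finset (α → ℕ))
    (bas : Module.Basis (↥𝔹) ℚ (α → ℚ))
    (e : CRE α) :
    ∃ L : List ((α → ℕ) × Finset (α → ℕ)),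
      CKA e (semiLin L) ∧
      ∀ p ∈ L, ∀ b : ↥𝔹, ∀ x ∈ p.2, ∀ y ∈ p.2,
        0 < bas.repr (toQ x) b → 0 ≤ bas.repr (toQ y) b := by
  let coord (b : ↥𝔹) : (α → ℕ) →+ ℚ :=
    (bas.coord b).toAddMonoidHom.comp ((Nat.castAddMonoidHom ℚ).compLeft α)
  obtain ⟨L₀, hL₀⟩ := CKA.exists_semiLin e
  obtain ⟨L, hL, hhom⟩ := IsSemiLinWith.bind (Q := fun _ => True) ⟨L₀, hL₀, fun _ _ => trivial⟩
    fun u C _ => (isSemiLinWith_linExpr_forall_homogeneous (Finset.univ.toList.map coord) u C).mono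
      fun _ hA => hA.2
  exact ⟨L, hL, fun r hr b x hx y hy => (hhom r hr (coord b) (by simp)).nonneg_of_pos hx hy⟩

/-- Every expression is provably equal to a finite union of homogeneous
linear expressions, where homogeneity is with respect to a basis `𝔹` of
`ℚ^α` consisting of Parikh vectors. -/
theorem homogeneous_decomposition (𝔹 : Finset (α → ℕ))
    (bas : Module.Basis (↥𝔹) ℚ (α → ℚ)) (hbas : ∀ b : ↥𝔹, bas b = toQ (b : α → ℕ))
    (e : CRE α) :
    ∃ L : List ((α → ℕ) × Finset (α → ℕ)),
      CKA e (semiLin L) ∧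
      ∀ p ∈ L, ∀ b : ↥𝔹, ∀ x ∈ p.2, ∀ y ∈ p.2,
        0 < bas.repr (toQ x) b → 0 ≤ bas.repr (toQ y) b :=
  homogeneous_decomposition_general 𝔹 bas e

end CKAnote
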